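/- arXiv:1404.5943 — 3 statements merged into one kernel-verified Lean document; each statement's English description precedes it below -/
import Mathlib

section
/- Let v > 0, let x, x' be real numbers with 0 ≤ x ≤ x' ≤ 1 and x' > 0, let u be a real number with 0 ≤ u ≤ v·x, and let τ : ℝ → ℝ be a function integrable on [x, x'] satisfying τ(z) ≥ max(0, v − u/z) for all z ∈ [x, x'] (with the convention that for z = 0 the condition is τ(0) ≥ 0 when u > 0). Then v·x + ∫_x^{x'} τ(z) dz ≥ (1 − 1/e)·v·x'. -/
open intervalIntegral

/-- Value covering (analytic core): if `v > 0`, `0 ≤ x ≤ x' ≤ 1` with `x' > 0`,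
`0 ≤ u ≤ v·x`, and `τ` is integrable on `[x, x']` with `τ z ≥ max 0 (v − u/z)`
for all `z ∈ [x, x']` (at `z = 0` only nonnegativity `τ 0 ≥ 0` is required),
then `v·x + ∫_x^{x'} τ(z) dz ≥ (1 − 1/e)·v·x'`. -/
theorem value_covering (v x x' u : ℝ) (τ : ℝ → ℝ)
    (hv : 0 < v) (hx : 0 ≤ x) (hxx' : x ≤ x') (hx'1 : x' ≤ 1) (hx' : 0 < x')
    (hu0 : 0 ≤ u) (hu : u ≤ v * x)
    (hint : IntervalIntegrable τ MeasureTheory.volume x x')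
    (hτ0 : ∀ z ∈ Set.Icc x x', 0 ≤ τ z)
    (hτ : ∀ z ∈ Set.Icc x x', z ≠ 0 → τ z ≥ max 0 (v - u / z)) :
    v * x + ∫ z in x..x', τ z ≥ (1 - 1 / Real.exp 1) * (v * x') := by
  have he : (0:ℝ) < Real.exp 1 := Real.exp_pos 1
  rcases eq_or_lt_of_le hx with hx0 | hxpos
  · -- x = 0, hence u = 0 and τ z ≥ v a.e.
    have hx0' : x = 0 := hx0.symm
    have hu0' : u = 0 := le_antisymm (by simpa [hx0'] using hu) hu0
    have hmono : (∫ z in x..x', (v:ℝ)) ≤ ∫ z in x..x', τ z := by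
      apply intervalIntegral.integral_mono_ae_restrict hxx' intervalIntegrable_const hint
      have h1 : ∀ᵐ z ∂(MeasureTheory.volume.restrict (Set.Icc x x')),
          z ∈ Set.Icc x x' := MeasureTheory.ae_restrict_mem measurableSet_Icc
      have h2 : ∀ᵐ z ∂(MeasureTheory.volume.restrict (Set.Icc x x')), z ≠ (0:ℝ) := by
        refine MeasureTheory.ae_restrict_of_ae ?_
        have : MeasureTheory.volume ({(0:ℝ)}) = 0 := MeasureTheory.measure_singleton 0
        refine MeasureTheory.measure_mono_null ?_ this
        intro z hz
        simpa using hz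
      filter_upwards [h1, h2] with z hz hz0
      have := hτ z hz hz0
      simpa [hu0'] using le_trans (le_max_right 0 (v - u / z)) this
    have hc : (∫ z in x..x', (v:ℝ)) = v * x' := by
      simp [hx0', smul_eq_mul, mul_comm]
    have hvx : v * x = 0 := by rw [hx0']; ring
    rw [hc] at hmono
    have hge : v * x + ∫ z in x..x', τ z ≥ v * x' := by linarith
    have : (1 - 1 / Real.exp 1) * (v * x') ≤ v * x' := by
      have hvx' : 0 ≤ v * x' := by positivity
      nlinarith [div_pos one_pos he]
    linarith
  · -- x > 0
    have hcont : ContinuousOn (fun z : ℝ => v - u * z⁻¹) (Set.uIcc x x') := by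
      apply continuousOn_const.sub
      apply continuousOn_const.mul
      apply ContinuousOn.inv₀ continuousOn_id
      intro z hz
      rw [Set.uIcc_of_le hxx'] at hz
      exact ne_of_gt (lt_of_lt_of_le hxpos hz.1)
    have hf_int : IntervalIntegrable (fun z : ℝ => v - u * z⁻¹)
        MeasureTheory.volume x x' := hcont.intervalIntegrable
    have hmono : (∫ z in x..x', (v - u * z⁻¹)) ≤ ∫ z in x..x', τ z := by
      apply intervalIntegral.integral_mono_on hxx' hf_int hint
      intro z hz
      have hzpos : 0 < z := lt_of_lt_of_le hxpos hz.1
      have := hτ z hz (ne_of_gt hzpos)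
      have h2 := le_trans (le_max_right 0 (v - u / z)) this
      simpa [div_eq_mul_inv] using h2
    have hinv : (∫ z in x..x', z⁻¹) = Real.log (x' / x) :=
      integral_inv_of_pos hxpos hx'
    have hcalc : (∫ z in x..x', (v - u * z⁻¹)) = v * (x' - x) - u * Real.log (x' / x) := by
      have h1 : IntervalIntegrable (fun z : ℝ => u * z⁻¹) MeasureTheory.volume x x' := by
        apply IntervalIntegrable.const_mul
        apply ContinuousOn.intervalIntegrable
        apply ContinuousOn.inv₀ continuousOn_id
        intro z hz
        rw [Set.uIcc_of_le hxx'] at hz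
        exact ne_of_gt (lt_of_lt_of_le hxpos hz.1)
      rw [intervalIntegral.integral_sub intervalIntegrable_const h1,
        intervalIntegral.integral_const_mul, hinv]
      simp [smul_eq_mul, mul_comm]
    -- key inequality: log(x'/x) ≤ x'/(e x)
    have hrat : (0:ℝ) < x' / x := div_pos hx' hxpos
    have hlog : Real.log (x' / x) ≤ x' / (Real.exp 1 * x) := by
      have h := Real.log_le_sub_one_of_pos (show 0 < x' / x / Real.exp 1 by positivity)
      rw [Real.log_div (ne_of_gt hrat) (ne_of_gt he), Real.log_exp] at h
      have heq : x' / x / Real.exp 1 = x' / (Real.exp 1 * x) := by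
        rw [div_div, mul_comm x (Real.exp 1)]
      linarith [heq ▸ h]
    have hlog0 : 0 ≤ Real.log (x' / x) := by
      apply Real.log_nonneg
      rw [le_div_iff₀ hxpos]; linarith
    have hkey : u * Real.log (x' / x) ≤ v * x' / Real.exp 1 := by
      have h1 : u * Real.log (x' / x) ≤ v * x * Real.log (x' / x) :=
        mul_le_mul_of_nonneg_right hu hlog0
      have h2 : v * x * Real.log (x' / x) ≤ v * x * (x' / (Real.exp 1 * x)) := by
        apply mul_le_mul_of_nonneg_left hlog (by positivity)
      have h3 : v * x * (x' / (Real.exp 1 * x)) = v * x' / Real.exp 1 := by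
        field_simp
      linarith
    have hfinal : v * x + ∫ z in x..x', τ z ≥ v * x' - u * Real.log (x' / x) := by
      have := hmono
      rw [hcalc] at this
      linarith
    have : (1 - 1 / Real.exp 1) * (v * x') = v * x' - v * x' / Real.exp 1 := by
      field_simp
    linarith
end

section
/- Let v > 0, let x, x' be real numbers with 0 ≤ x ≤ x' ≤ 1 and x' > 0, and let u be a real number with 0 < u ≤ v·x. Then v·x + ∫_x^{x'} max(0, v − u/z) dz ≥ v·x' + u·log(u/(v·x')). -/
open intervalIntegral

/-- Intermediate lower bound in the value covering lemma: for `v > 0`,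
`0 ≤ x ≤ x' ≤ 1` with `x' > 0` and `0 < u ≤ v·x`,
`v·x + ∫_x^{x'} max(0, v − u/z) dz ≥ v·x' + u·log(u/(v·x'))`. -/
theorem value_covering_intermediate (v x x' u : ℝ)
    (hv : 0 < v) (hx : 0 ≤ x) (hxx' : x ≤ x') (hx'1 : x' ≤ 1) (hx' : 0 < x')
    (hu0 : 0 < u) (hu : u ≤ v * x) :
    v * x + ∫ z in x..x', max 0 (v - u / z) ≥ v * x' + u * Real.log (u / (v * x')) := by
  have hx0 : 0 < x := by nlinarith
  -- drop the max on [x, x']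
  have hcongr : ∫ z in x..x', max 0 (v - u / z) = ∫ z in x..x', (v - u * z⁻¹) := by
    apply intervalIntegral.integral_congr
    intro z hz
    rw [Set.uIcc_of_le hxx'] at hz
    have hz0 : 0 < z := lt_of_lt_of_le hx0 hz.1
    have h1 : u / z ≤ u / x := div_le_div_of_nonneg_left hu0.le hx0 hz.1
    have h2 : u / x ≤ v := (div_le_iff₀ hx0).mpr (by linarith [hu])
    have : 0 ≤ v - u / z := by linarith
    simpa [div_eq_mul_inv] using max_eq_right this
  have h0notin : (0:ℝ) ∉ Set.uIcc x x' := by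
    rw [Set.uIcc_of_le hxx']
    intro h
    exact absurd h.1 (not_le.mpr hx0)
  have hint : ∫ z in x..x', (v - u * z⁻¹) = v * (x' - x) - u * Real.log (x' / x) := by
    have hinv : IntervalIntegrable (fun z : ℝ => z⁻¹) MeasureTheory.volume x x' :=
      intervalIntegrable_inv (fun z hz => ne_of_gt (lt_of_lt_of_le hx0
        ((Set.uIcc_of_le hxx' ▸ hz).1))) continuousOn_id
    rw [intervalIntegral.integral_sub (intervalIntegrable_const) (hinv.const_mul u),
      intervalIntegral.integral_const, intervalIntegral.integral_const_mul,
      integral_inv h0notin, smul_eq_mul, div_eq_mul_inv]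
    ring
  rw [hcongr, hint]
  have hlog : Real.log (x' / x) + Real.log (u / (v * x')) = Real.log (u / (v * x)) := by
    rw [← Real.log_mul (by positivity) (by positivity)]
    congr 1
    field_simp
  have hle : Real.log (u / (v * x)) ≤ 0 := by
    apply Real.log_nonpos (by positivity)
    rw [div_le_one (by positivity)]
    linarith
  nlinarith [hlog, hle, hu0]
end

section
/- Let M be a matroid on a ground set α, and let S₁ and S₂ be finite independent sets of M with the same cardinality k. Then there exists a bijection f from S₂ \ S₁ to S₁ \ S₂ such that for every i ∈ S₂ \ S₁, the set (S₁ \ {f(i)}) ∪ {i} is independent in M. -/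
/-!
Join `x ∈ S₂ \ S₁` to `y ∈ S₁ \ S₂` when `x` can replace `y` in `S₁`. The required bijection is a
perfect matching of this bipartite exchange graph, so by Hall's theorem it suffices to see that
every `A ⊆ S₂ \ S₁` has at least `|A|` neighbours. If some `x ∈ A` lies outside the closure
of `S₁`, it is adjacent to all of `S₁ \ S₂`. Otherwise each `x ∈ A` is spanned by its fundamental
circuit in `S₁`, whose elements other than `x` are exactly the `y ∈ S₁` that `x` can replace;
hence `(S₁ ∩ S₂) ∪ A`, which is independent, lies in the closure of `(S₁ ∩ S₂) ∪ N(A)`, and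
comparing cardinalities gives `|A| ≤ |N(A)|`.
-/

open Set
open scoped Finset

namespace Finset

variable {α : Type*} [DecidableEq α]

theorem exists_bijOn_of_card_le_card_biUnion {s t : Finset α} (N : α → Finset α)
    (hNt : ∀ a ∈ s, N a ⊆ t) (hts : #t ≤ #s) (hall : ∀ A ⊆ s, #A ≤ #(A.biUnion N)) :
    ∃ f : α → α, BijOn f s t ∧ ∀ a ∈ s, f a ∈ N a := by
  obtain ⟨g, hg_inj, hg_mem⟩ :=
    (all_card_le_biUnion_card_iff_existsInjective' fun a : s ↦ N a).1 fun A ↦ by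
      simpa [image_biUnion, card_image_of_injective _ Subtype.val_injective] using
        hall (A.image Subtype.val) (by simp +contextual [subset_iff])
  set f : α → α := fun a ↦ if h : a ∈ s then g ⟨a, h⟩ else a
  have hf_mem : ∀ a ∈ s, f a ∈ N a := fun a ha ↦ by simpa [f, ha] using hg_mem ⟨a, ha⟩
  have hmaps : MapsTo f s t := fun a ha ↦ hNt a ha (hf_mem a ha)
  have hinj : InjOn f s := by
    intro a ha b hb hab
    rw [mem_coe] at ha hb
    have hg : g ⟨a, ha⟩ = g ⟨b, hb⟩ := by simpa [f, ha, hb] using hab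
    exact congrArg Subtype.val (hg_inj hg)
  exact ⟨f, ⟨hmaps, hinj, surjOn_of_injOn_of_card_le f hmaps hinj hts⟩, hf_mem⟩

end Finset

namespace Matroid

variable {α : Type*} {M : Matroid α} {I J : Set α} {x : α}

lemma Indep.encard_le_encard_of_subset_closure (hI : M.Indep I) (hIJ : I ⊆ M.closure J) :
    I.encard ≤ J.encard :=
  calc I.encard ≤ M.eRk (M.closure J) := hI.encard_le_eRk_of_subset hIJ
    _ = M.eRk J := M.eRk_closure_eq J
    _ ≤ J.encard := M.eRk_le_encard J

lemma Indep.mem_closure_setOf_insert_sdiff_indep (hI : M.Indep I) (hx : x ∈ M.closure I)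
    (hxI : x ∉ I) : x ∈ M.closure {y ∈ I | M.Indep (insert x (I \ {y}))} := by
  have hC := hI.fundCircuit_isCircuit hx hxI
  refine M.closure_subset_closure ?_ (hC.mem_closure_sdiff_singleton_of_mem (M.mem_fundCircuit x I))
  rintro y ⟨hyC, hyx : y ≠ x⟩
  refine ⟨(M.fundCircuit_subset_insert x I hyC).resolve_left hyx, ?_⟩
  rw [insert_sdiff_singleton_comm hyx.symm]
  exact (hI.mem_fundCircuit_iff hx hxI).1 hyC

variable [DecidableEq α]

open Classical in
noncomputable def exchangeNeighbors (M : Matroid α) (S₁ S₂ : Finset α) (x : α) : Finset α :=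
  {y ∈ S₁ \ S₂ | M.Indep (insert x ((S₁ : Set α) \ {y}))}

variable {S₁ S₂ A : Finset α}

lemma mem_exchangeNeighbors {y : α} : y ∈ M.exchangeNeighbors S₁ S₂ x ↔
    y ∈ S₁ \ S₂ ∧ M.Indep (insert x ((S₁ : Set α) \ {y})) := by
  simp [exchangeNeighbors]

lemma exchangeNeighbors_subset : M.exchangeNeighbors S₁ S₂ x ⊆ S₁ \ S₂ :=
  fun _ hy ↦ (mem_exchangeNeighbors.1 hy).1

lemma exchangeNeighbors_eq_of_indep_insert (hx : M.Indep (insert x S₁)) :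
    M.exchangeNeighbors S₁ S₂ x = S₁ \ S₂ :=
  exchangeNeighbors_subset.antisymm fun _ hy ↦
    mem_exchangeNeighbors.2 ⟨hy, hx.subset (insert_subset_insert sdiff_subset)⟩

lemma mem_closure_inter_union_exchangeNeighbors (h₁ : M.Indep S₁) (hx : x ∈ M.closure S₁)
    (hxS₁ : x ∉ S₁) : x ∈ M.closure ↑(S₁ ∩ S₂ ∪ M.exchangeNeighbors S₁ S₂ x) := by
  refine M.closure_subset_closure ?_ (h₁.mem_closure_setOf_insert_sdiff_indep hx hxS₁)
  rintro y ⟨hyS₁, hy⟩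
  by_cases hyS₂ : y ∈ S₂ <;> simp_all [mem_exchangeNeighbors]

theorem card_le_card_biUnion_exchangeNeighbors_of_forall_mem_closure (h₁ : M.Indep S₁)
    (h₂ : M.Indep S₂) (hA : A ⊆ S₂ \ S₁) (hAcl : ∀ x ∈ A, x ∈ M.closure S₁) :
    #A ≤ #(A.biUnion (M.exchangeNeighbors S₁ S₂)) := by
  set T := S₁ ∩ S₂
  set NA := A.biUnion (M.exchangeNeighbors S₁ S₂)
  have hAS₁ : ∀ z ∈ A, z ∉ S₁ := fun z hz ↦ (Finset.mem_sdiff.1 (hA hz)).2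
  have hTA : Disjoint T A :=
    Finset.disjoint_left.2 fun z hzT hzA ↦ hAS₁ z hzA (Finset.mem_inter.1 hzT).1
  have hindep : M.Indep ↑(T ∪ A) :=
    h₂.subset (Finset.coe_subset.2 (Finset.union_subset Finset.inter_subset_right
      (hA.trans Finset.sdiff_subset)))
  have hspan : (↑(T ∪ A) : Set α) ⊆ M.closure ↑(T ∪ NA) := by
    intro z hz
    rcases Finset.mem_union.1 hz with hzT | hzA
    · exact M.mem_closure_of_mem' (by simp [hzT]) (h₁.subset_ground (Finset.mem_inter.1 hzT).1)
    · refine M.closure_subset_closure ?_ (mem_closure_inter_union_exchangeNeighbors (S₂ := S₂) h₁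
        (hAcl z hzA) (by simpa using hAS₁ z hzA))
      exact_mod_cast Finset.union_subset_union_right (Finset.subset_biUnion_of_mem _ hzA)
  have hle := hindep.encard_le_encard_of_subset_closure hspan
  rw [Set.encard_coe_eq_coe_finsetCard, Set.encard_coe_eq_coe_finsetCard, Nat.cast_le,
    Finset.card_union_of_disjoint hTA] at hle
  have := Finset.card_union_le T NA
  omega

theorem card_le_card_biUnion_exchangeNeighbors (h₁ : M.Indep S₁) (h₂ : M.Indep S₂)
    (hcard : #S₁ = #S₂) (hA : A ⊆ S₂ \ S₁) : #A ≤ #(A.biUnion (M.exchangeNeighbors S₁ S₂)) := by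
  by_cases hfree : ∃ x ∈ A, x ∉ M.closure S₁
  · obtain ⟨x, hxA, hx⟩ := hfree
    obtain ⟨hxS₂, hxS₁⟩ := Finset.mem_sdiff.1 (hA hxA)
    have hxN : M.exchangeNeighbors S₁ S₂ x = S₁ \ S₂ := exchangeNeighbors_eq_of_indep_insert
      ((h₁.notMem_closure_iff_of_notMem (by simpa using hxS₁) (h₂.subset_ground hxS₂)).1 hx)
    calc #A ≤ #(S₂ \ S₁) := Finset.card_le_card hA
      _ = #(S₁ \ S₂) := Finset.card_sdiff_comm hcard.symm
      _ ≤ #(A.biUnion (M.exchangeNeighbors S₁ S₂)) :=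
        hxN ▸ Finset.card_le_card (Finset.subset_biUnion_of_mem _ hxA)
  · push Not at hfree
    exact card_le_card_biUnion_exchangeNeighbors_of_forall_mem_closure h₁ h₂ hA hfree

end Matroid

open Matroid in
/-- Matroid replacement property: for equal-size finite independent sets
`S₁`, `S₂` of a matroid `M`, there is a bijection `f` from `S₂ \ S₁` to
`S₁ \ S₂` such that for every `i ∈ S₂ \ S₁`, the set `(S₁ \ {f i}) ∪ {i}`
is independent in `M`. -/
theorem matroid_replacement_property {α : Type*} [DecidableEq α] (M : Matroid α)
    (S₁ S₂ : Finset α) (k : ℕ)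
    (h₁ : M.Indep (S₁ : Set α)) (h₂ : M.Indep (S₂ : Set α))
    (hk₁ : S₁.card = k) (hk₂ : S₂.card = k) :
    ∃ f : α → α, Set.BijOn f (↑(S₂ \ S₁) : Set α) (↑(S₁ \ S₂) : Set α) ∧
      ∀ i ∈ S₂ \ S₁, M.Indep (insert i ((S₁ : Set α) \ {f i})) := by
  have hcard : S₁.card = S₂.card := hk₁.trans hk₂.symm
  obtain ⟨f, hf, hf_nbr⟩ := Finset.exists_bijOn_of_card_le_card_biUnion (M.exchangeNeighbors S₁ S₂)
    (fun _ _ ↦ exchangeNeighbors_subset) (Finset.card_sdiff_comm hcard).le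
    (fun _ hA ↦ card_le_card_biUnion_exchangeNeighbors h₁ h₂ hcard hA)
  exact ⟨f, hf, fun i hi ↦ (mem_exchangeNeighbors.1 (hf_nbr i hi)).2⟩
end
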